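/- Let P be a probability measure on 𝒮 := 𝒲 × ℝ × {0,1} × [0,1] (the law of (W, A, Δ, Y)), with measurable nuisance functions G₀, g₀, Q₀, Q₀ᵥ on 𝒮 (versions of the conditional expectations from the base setup, regarded via Doob–Dynkin factorization as functions of (a, w) resp. w), satisfying G₀ ≥ δ, g₀ ≥ δ, and let Ψ₀ := ∫ Q₀ᵥ dP and D₀ denote the efficient influence function, so that ∫ D₀ dP = 0. Let Ḡ, ḡ, Q̄, Q̄ᵥ be measurable estimated nuisances as in the base setup, let o₁, …, oₙ ∈ 𝒮 be sample points such that the two srTMLE score equations hold: (1/n)Σᵢ (1{aᵢ ≥ v}δᵢ/(ḡ(wᵢ)Ḡ(aᵢ, wᵢ)))·(yᵢ − Q̄(aᵢ, wᵢ)) = 0 and (1/n)Σᵢ (1{aᵢ ≥ v}/ḡ(wᵢ))·(Q̄(aᵢ, wᵢ) − Q̄ᵥ(wᵢ)) = 0, and set ψ* := (1/n)Σᵢ Q̄ᵥ(wᵢ) and D̄(w, a, δ', y) := (1{a ≥ v}δ'/(ḡ(w)Ḡ(a, w)))·(y − Q̄(a, w)) + (1{a ≥ v}/ḡ(w))·(Q̄(a,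 w) − Q̄ᵥ(w)) + Q̄ᵥ(w) − ψ*. Then the exact expansion holds: ψ* − Ψ₀ = (1/n)Σᵢ D₀(oᵢ) + [ (1/n)Σᵢ (D̄ − D₀)(oᵢ) − ∫ (D̄ − D₀) dP ] + R₂, where R₂ := ∫ (1{a ≥ v}/ḡ)·((G₀ − Ḡ)/Ḡ)·(Q₀ − Q̄) dP + ∫ ((g₀ − ḡ)/ḡ)·(Q₀ᵥ − Q̄ᵥ) dP. -/

import Mathlib

/-!
The score equations make the empirical mean of `D̄` vanish and `∫ D₀ dP = 0`, so the expansion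
reduces to the population identity `∫ D̄ dP = R₂ + Ψ₀ - ψ*`. Pointwise, `D̄` minus the two
remainder integrands and `Q₀ᵥ - ψ*` is a sum of four terms `f * (Z - E[Z | 𝓜])` with `f`
measurable for `𝓜 = σ(A, W)` or `𝓜 = σ(W)`: they integrate to zero by the pull-out property of
conditional expectation. The bounds `G, g ≥ δ` make every term bounded, hence integrable.
-/

open MeasureTheory ProbabilityTheory
open scoped ENNReal

section Bounded

variable {α : Type*} {_ : MeasurableSpace α} {μ : Measure α}

theorem MeasureTheory.MemLp.mul_top {𝕜 : Type*} [NormedRing 𝕜] {f g : α → 𝕜}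
    (hf : MemLp f ∞ μ) (hg : MemLp g ∞ μ) : MemLp (fun x => f x * g x) ∞ μ :=
  hg.mul' hf

theorem MeasureTheory.MemLp.div_of_le {f g : α → ℝ} {δ : ℝ} (hf : MemLp f ∞ μ)
    (hg : AEStronglyMeasurable g μ) (hδ : 0 < δ) (hgδ : ∀ᵐ x ∂μ, δ ≤ g x) :
    MemLp (fun x => f x / g x) ∞ μ := by
  have hinv : MemLp (fun x => (g x)⁻¹) ∞ μ :=
    memLp_top_of_bound hg.aemeasurable.inv.aestronglyMeasurable δ⁻¹ <| hgδ.mono fun x hx => by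
      rw [norm_inv, Real.norm_of_nonneg (hδ.le.trans hx)]
      exact inv_anti₀ hδ hx
  simpa only [div_eq_mul_inv] using hf.mul_top hinv

end Bounded

section CondExp

variable {Ω : Type*} {m mΩ : MeasurableSpace Ω} {μ : Measure Ω} {f g h : Ω → ℝ}

theorem mul_sub_ae_eq_sub_condExp (hf : StronglyMeasurable[m] f)
    (hfg : Integrable (fun x => f x * g x) μ) (hg : Integrable g μ) (hh : h =ᵐ[μ] μ[g|m]) :
    (fun x => f x * (g x - h x)) =ᵐ[μ] fun x => f x * g x - μ[fun x => f x * g x|m] x := by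
  filter_upwards [condExp_mul_of_stronglyMeasurable_left hf hfg hg, hh] with x hfgx hhx
  rw [show (fun x => f x * g x) = f * g from rfl, hfgx, hhx, Pi.mul_apply, mul_sub]

theorem MeasureTheory.Integrable.mul_sub_of_ae_eq_condExp (hf : StronglyMeasurable[m] f)
    (hfg : Integrable (fun x => f x * g x) μ) (hg : Integrable g μ) (hh : h =ᵐ[μ] μ[g|m]) :
    Integrable (fun x => f x * (g x - h x)) μ :=
  (hfg.sub integrable_condExp).congr (mul_sub_ae_eq_sub_condExp hf hfg hg hh).symm

theorem integral_mul_sub_eq_zero_of_ae_eq_condExp (hm : m ≤ mΩ) [SigmaFinite (μ.trim hm)]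
    (hf : StronglyMeasurable[m] f) (hfg : Integrable (fun x => f x * g x) μ)
    (hg : Integrable g μ) (hh : h =ᵐ[μ] μ[g|m]) :
    ∫ x, f x * (g x - h x) ∂μ = 0 := by
  rw [integral_congr_ae (mul_sub_ae_eq_sub_condExp hf hfg hg hh),
    integral_sub hfg integrable_condExp, integral_condExp hm, sub_self]

theorem MeasureTheory.MemLp.integral_mul_sub_eq_zero_of_ae_eq_condExp [IsFiniteMeasure μ]
    (hm : m ≤ mΩ) (hfm : Measurable[m] f) (hf : MemLp f ∞ μ) (hg : MemLp g ∞ μ)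
    (hh : h =ᵐ[μ] μ[g|m]) :
    Integrable (fun x => f x * (g x - h x)) μ ∧ ∫ x, f x * (g x - h x) ∂μ = 0 :=
  have hfg := (hf.mul_top hg).integrable le_top
  ⟨hfg.mul_sub_of_ae_eq_condExp hfm.stronglyMeasurable (hg.integrable le_top) hh,
    _root_.integral_mul_sub_eq_zero_of_ae_eq_condExp hm hfm.stronglyMeasurable hfg
      (hg.integrable le_top) hh⟩

end CondExp

theorem Filter.EventuallyEq.mul_of_eq_div {α : Type*} {l : Filter α} {f g d : α → ℝ}
    (h : f =ᶠ[l] fun x => g x / d x) (hd : ∀ x, d x ≠ 0) : (fun x => f x * d x) =ᶠ[l] g :=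
  h.mono fun x (hx : f x = g x / d x) => show f x * d x = g x by rw [hx, div_mul_cancel₀ _ (hd x)]

theorem mean_sub_mean_eq_zero {n : ℕ} (x : Fin n → ℝ) :
    (1 / n : ℝ) * ∑ i, (x i - (1 / n : ℝ) * ∑ j, x j) = 0 := by
  rw [Finset.sum_sub_distrib, Finset.sum_const, Finset.card_univ, Fintype.card_fin, nsmul_eq_mul]
  rcases eq_or_ne (n : ℝ) 0 with hn | hn
  · simp [hn]
  · field_simp
    ring

section InfluenceFunction

variable {Ω : Type*}

/-- The paper's `D(w, a, δ', y)` evaluated at nuisances `g, G, Q, Qv` and target value `ψ`, with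
`I = 1{a ≥ v}`, `Δ = δ'` and `Y = y` read off the observation `x`. -/
noncomputable def influenceFunction (I Δ Y g G Q Qv : Ω → ℝ) (ψ : ℝ) (x : Ω) : ℝ :=
  I x / g x * (Δ x / G x) * (Y x - Q x) + I x / g x * (Q x - Qv x) + (Qv x - ψ)

theorem mean_influenceFunction_eq_zero {I Δ Y g G Q Qv : Ω → ℝ} {n : ℕ} (o : Fin n → Ω)
    (hscore₁ : (1 / n : ℝ) * ∑ i, I (o i) * Δ (o i) / (g (o i) * G (o i)) *
      (Y (o i) - Q (o i)) = 0)
    (hscore₂ : (1 / n : ℝ) * ∑ i, I (o i) / g (o i) * (Q (o i) - Qv (o i)) = 0) :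
    (1 / n : ℝ) * ∑ i, influenceFunction I Δ Y g G Q Qv ((1 / n : ℝ) * ∑ j, Qv (o j)) (o i)
      = 0 := by
  simp only [influenceFunction, div_mul_div_comm, Finset.sum_add_distrib, mul_add, hscore₁,
    hscore₂, zero_add]
  exact mean_sub_mean_eq_zero (Qv ∘ o)

variable {mΩ : MeasurableSpace Ω} {μ : Measure Ω}

theorem integrable_influenceFunction [IsFiniteMeasure μ] {I Δ Y g G Q Qv : Ω → ℝ} {δ : ℝ}
    (hδ : 0 < δ) (hI : MemLp I ∞ μ) (hΔ : MemLp Δ ∞ μ) (hY : MemLp Y ∞ μ)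
    (hg : AEStronglyMeasurable g μ) (hG : AEStronglyMeasurable G μ) (hQ : MemLp Q ∞ μ)
    (hQv : MemLp Qv ∞ μ) (hgδ : ∀ x, δ ≤ g x) (hGδ : ∀ x, δ ≤ G x) (ψ : ℝ) :
    Integrable (influenceFunction I Δ Y g G Q Qv ψ) μ := by
  have hIg := hI.div_of_le hg hδ (ae_of_all _ hgδ)
  have hΔG := hΔ.div_of_le hG hδ (ae_of_all _ hGδ)
  refine MemLp.integrable le_top ?_
  exact ((hIg.mul_top hΔG |>.mul_top (hY.sub hQ)).add (hIg.mul_top (hQ.sub hQv))).add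
    (hQv.sub (memLp_const ψ))

theorem influenceFunction_eq_remainder_add {I Δ Y G₀ g₀ Q₀ Q₀ᵥ G g Q Qv : Ω → ℝ} {x : Ω}
    (hg : g x ≠ 0) (hG : G x ≠ 0) (ψ : ℝ) :
    influenceFunction I Δ Y g G Q Qv ψ x =
      I x / g x * ((G₀ x - G x) / G x) * (Q₀ x - Q x)
        + (g₀ x - g x) / g x * (Q₀ᵥ x - Qv x) + Q₀ᵥ x - ψ
        + (I x / g x / G x * (Y x * Δ x - Q₀ x * G₀ x) - I x * Q x / g x / G x * (Δ x - G₀ x)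
          + (1 / g x * (Q₀ x * I x - Q₀ᵥ x * g₀ x) - Qv x / g x * (I x - g₀ x))) := by
  simp only [influenceFunction]
  field_simp
  ring

variable {m₀ m₁ : MeasurableSpace Ω}

theorem integral_influenceFunction_eq [IsProbabilityMeasure μ] (hm₀₁ : m₀ ≤ m₁) (hm₁ : m₁ ≤ mΩ)
    {I Δ Y G₀ g₀ Q₀ Q₀ᵥ Gbar gbar Qbar Qbarv : Ω → ℝ} {δ : ℝ} (hδ : 0 < δ)
    (hIm : Measurable[m₁] I) (hGbarm : Measurable[m₁] Gbar) (hQbarm : Measurable[m₁] Qbar)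
    (hgbarm : Measurable[m₀] gbar) (hQbarvm : Measurable[m₀] Qbarv)
    (hI : MemLp I ∞ μ) (hΔ : MemLp Δ ∞ μ) (hY : MemLp Y ∞ μ) (hG₀ : MemLp G₀ ∞ μ)
    (hg₀ : MemLp g₀ ∞ μ) (hQ₀ : MemLp Q₀ ∞ μ) (hQ₀ᵥ : MemLp Q₀ᵥ ∞ μ) (hGbar : MemLp Gbar ∞ μ)
    (hgbar : MemLp gbar ∞ μ) (hQbar : MemLp Qbar ∞ μ) (hQbarv : MemLp Qbarv ∞ μ)
    (hG₀δ : ∀ x, δ ≤ G₀ x) (hg₀δ : ∀ x, δ ≤ g₀ x) (hGbarδ : ∀ x, δ ≤ Gbar x)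
    (hgbarδ : ∀ x, δ ≤ gbar x) (hG₀E : G₀ =ᵐ[μ] μ[Δ|m₁])
    (hQ₀E : Q₀ =ᵐ[μ] fun x => μ[fun x => Y x * Δ x|m₁] x / G₀ x) (hg₀E : g₀ =ᵐ[μ] μ[I|m₀])
    (hQ₀ᵥE : Q₀ᵥ =ᵐ[μ] fun x => μ[fun x => Q₀ x * I x|m₀] x / g₀ x)
    (ψ : ℝ) :
    ∫ x, influenceFunction I Δ Y gbar Gbar Qbar Qbarv ψ x ∂μ
      = ∫ x, I x / gbar x * ((G₀ x - Gbar x) / Gbar x) * (Q₀ x - Qbar x) ∂μ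
        + ∫ x, (g₀ x - gbar x) / gbar x * (Q₀ᵥ x - Qbarv x) ∂μ + ∫ x, Q₀ᵥ x ∂μ - ψ := by
  have hm₀ : m₀ ≤ mΩ := hm₀₁.trans hm₁
  have hgbarm₁ : Measurable[m₁] gbar := hgbarm.mono hm₀₁ le_rfl
  have hgbar0 (x : Ω) : gbar x ≠ 0 := (hδ.trans_le (hgbarδ x)).ne'
  have hGbar0 (x : Ω) : Gbar x ≠ 0 := (hδ.trans_le (hGbarδ x)).ne'
  have hdiv_gbar {f : Ω → ℝ} (hf : MemLp f ∞ μ) : MemLp (fun x => f x / gbar x) ∞ μ :=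
    hf.div_of_le hgbar.1 hδ (ae_of_all _ hgbarδ)
  have hdiv_Gbar {f : Ω → ℝ} (hf : MemLp f ∞ μ) : MemLp (fun x => f x / Gbar x) ∞ μ :=
    hf.div_of_le hGbar.1 hδ (ae_of_all _ hGbarδ)
  obtain ⟨i₁, h₁⟩ := MemLp.integral_mul_sub_eq_zero_of_ae_eq_condExp hm₁
    (f := fun x => I x / gbar x / Gbar x) ((hIm.div hgbarm₁).div hGbarm)
    (hdiv_Gbar (hdiv_gbar hI)) (hY.mul_top hΔ)
    (hQ₀E.mul_of_eq_div fun x => (hδ.trans_le (hG₀δ x)).ne')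
  obtain ⟨i₂, h₂⟩ := MemLp.integral_mul_sub_eq_zero_of_ae_eq_condExp hm₁
    (f := fun x => I x * Qbar x / gbar x / Gbar x) (((hIm.mul hQbarm).div hgbarm₁).div hGbarm)
    (hdiv_Gbar (hdiv_gbar (hI.mul_top hQbar))) hΔ hG₀E
  obtain ⟨i₃, h₃⟩ := MemLp.integral_mul_sub_eq_zero_of_ae_eq_condExp hm₀
    (f := fun x => 1 / gbar x) (measurable_const.div hgbarm) (hdiv_gbar (memLp_const 1))
    (hQ₀.mul_top hI) (hQ₀ᵥE.mul_of_eq_div fun x => (hδ.trans_le (hg₀δ x)).ne')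
  obtain ⟨i₄, h₄⟩ := MemLp.integral_mul_sub_eq_zero_of_ae_eq_condExp hm₀
    (f := fun x => Qbarv x / gbar x) (hQbarvm.div hgbarm) (hdiv_gbar hQbarv) hI hg₀E
  have iA := (((hdiv_gbar hI).mul_top (hdiv_Gbar (hG₀.sub hGbar))).mul_top
    (hQ₀.sub hQbar)).integrable le_top
  have iB := ((hdiv_gbar (hg₀.sub hgbar)).mul_top (hQ₀ᵥ.sub hQbarv)).integrable le_top
  have iC := hQ₀ᵥ.integrable le_top
  simp_rw [influenceFunction_eq_remainder_add (G₀ := G₀) (g₀ := g₀) (Q₀ := Q₀) (Q₀ᵥ := Q₀ᵥ)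
    (hgbar0 _) (hGbar0 _)]
  rw [integral_add, integral_sub, integral_add, integral_add, integral_add, integral_sub,
    integral_sub, h₁, h₂, h₃, h₄, integral_const]
  · simp
  all_goals fun_prop

end InfluenceFunction

theorem stmt13_general {𝒲 : Type*} [MeasurableSpace 𝒲]
    (P : Measure (𝒲 × ℝ × ℝ × ℝ)) [IsProbabilityMeasure P]
    (v δ : ℝ) (hδ0 : 0 < δ)
    (hΔ01 : ∀ᵐ s ∂P, s.2.2.1 = 0 ∨ s.2.2.1 = 1)
    (hY01 : ∀ᵐ s ∂P, s.2.2.2 ∈ Set.Icc (0 : ℝ) 1)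
    (m0 m1 : MeasurableSpace (𝒲 × ℝ × ℝ × ℝ))
    (hm0 : m0 = MeasurableSpace.comap (fun s : 𝒲 × ℝ × ℝ × ℝ => s.1) inferInstance)
    (hm1 : m1 = MeasurableSpace.comap (fun s : 𝒲 × ℝ × ℝ × ℝ => (s.2.1, s.1)) inferInstance)
    (G₀ g₀ Q₀ Q₀ᵥ : 𝒲 × ℝ × ℝ × ℝ → ℝ)
    (hG₀meas : Measurable[m1] G₀) (hg₀meas : Measurable[m0] g₀)
    (hQ₀meas : Measurable[m1] Q₀) (hQ₀ᵥmeas : Measurable[m0] Q₀ᵥ)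
    (hG₀b : ∀ s, G₀ s ∈ Set.Icc δ 1) (hg₀b : ∀ s, g₀ s ∈ Set.Icc δ 1)
    (hQ₀b : ∀ s, |Q₀ s| ≤ 1 / δ) (hQ₀ᵥb : ∀ s, |Q₀ᵥ s| ≤ 1 / δ)
    (hG₀ : G₀ =ᵐ[P] P[fun s => s.2.2.1 | m1])
    (hg₀ : g₀ =ᵐ[P] P[fun s => if v ≤ s.2.1 then (1 : ℝ) else 0 | m0])
    (hQ₀ : Q₀ =ᵐ[P] fun s => ((P[fun s' => s'.2.2.2 * s'.2.2.1 | m1]) s) / G₀ s)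
    (hQ₀ᵥ : Q₀ᵥ =ᵐ[P] fun s =>
      ((P[fun s' => Q₀ s' * (if v ≤ s'.2.1 then (1 : ℝ) else 0) | m0]) s) / g₀ s)
    (Ψ₀ : ℝ) (hΨ₀ : Ψ₀ = ∫ s, Q₀ᵥ s ∂P)
    (Gbar gbar Qbar Qbarv : 𝒲 × ℝ × ℝ × ℝ → ℝ)
    (hGbarMeas : Measurable[m1] Gbar) (hgbarMeas : Measurable[m0] gbar)
    (hQbarMeas : Measurable[m1] Qbar) (hQbarvMeas : Measurable[m0] Qbarv)
    (hGbarB : ∀ s, Gbar s ∈ Set.Icc δ 1) (hgbarB : ∀ s, gbar s ∈ Set.Icc δ 1)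
    (hQbarB : ∀ s, Qbar s ∈ Set.Icc (0 : ℝ) 1) (hQbarvB : ∀ s, Qbarv s ∈ Set.Icc (0 : ℝ) 1)
    (n : ℕ) (o : Fin n → 𝒲 × ℝ × ℝ × ℝ)
    (hscore1 : (1 / n : ℝ) * ∑ i, ((if v ≤ (o i).2.1 then (1 : ℝ) else 0) * (o i).2.2.1 /
        (gbar (o i) * Gbar (o i))) * ((o i).2.2.2 - Qbar (o i)) = 0)
    (hscore2 : (1 / n : ℝ) * ∑ i, ((if v ≤ (o i).2.1 then (1 : ℝ) else 0) / gbar (o i)) *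
        (Qbar (o i) - Qbarv (o i)) = 0)
    (ψstar : ℝ) (hψstar : ψstar = (1 / n : ℝ) * ∑ i, Qbarv (o i))
    (D₀ Dbar : 𝒲 × ℝ × ℝ × ℝ → ℝ)
    (hD₀ : D₀ = fun s =>
      ((if v ≤ s.2.1 then (1 : ℝ) else 0) / g₀ s) * (s.2.2.1 / G₀ s) * (s.2.2.2 - Q₀ s)
      + ((if v ≤ s.2.1 then (1 : ℝ) else 0) / g₀ s) * (Q₀ s - Q₀ᵥ s) + (Q₀ᵥ s - Ψ₀))
    (hD₀mean : ∫ s, D₀ s ∂P = 0)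
    (hDbar : Dbar = fun s =>
      ((if v ≤ s.2.1 then (1 : ℝ) else 0) * s.2.2.1 / (gbar s * Gbar s)) * (s.2.2.2 - Qbar s)
      + ((if v ≤ s.2.1 then (1 : ℝ) else 0) / gbar s) * (Qbar s - Qbarv s) + (Qbarv s - ψstar))
    (R₂ : ℝ)
    (hR₂ : R₂ = ∫ s, ((if v ≤ s.2.1 then (1 : ℝ) else 0) / gbar s) *
        ((G₀ s - Gbar s) / Gbar s) * (Q₀ s - Qbar s) ∂P
      + ∫ s, ((g₀ s - gbar s) / gbar s) * (Q₀ᵥ s - Qbarv s) ∂P) :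
    ψstar - Ψ₀ = (1 / n : ℝ) * ∑ i, D₀ (o i)
      + ((1 / n : ℝ) * ∑ i, (Dbar (o i) - D₀ (o i)) - ∫ s, (Dbar s - D₀ s) ∂P)
      + R₂ := by
  have hm₁ : m1 ≤ Prod.instMeasurableSpace :=
    hm1 ▸ (measurable_snd.fst.prodMk measurable_fst).comap_le
  have hm₀₁ : m0 ≤ m1 := hm0 ▸ hm1 ▸
    MeasurableSpace.comap_le_comap_of_eq_comp Prod.snd measurable_snd rfl
  have hm₀ := hm₀₁.trans hm₁
  have hI : Measurable[m1] fun s : 𝒲 × ℝ × ℝ × ℝ => if v ≤ s.2.1 then (1 : ℝ) else 0 := hm1 ▸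
    (measurable_const.ite (measurableSet_le measurable_const measurable_fst)
      measurable_const).comp (comap_measurable _)
  have bdd {m : MeasurableSpace (𝒲 × ℝ × ℝ × ℝ)} (hm : m ≤ Prod.instMeasurableSpace)
      {f : 𝒲 × ℝ × ℝ × ℝ → ℝ} {a b : ℝ} (hf : Measurable[m] f) (hab : ∀ s, f s ∈ Set.Icc a b) :
      MemLp f ∞ P :=
    memLp_of_bounded (ae_of_all _ hab) (hf.mono hm le_rfl).aestronglyMeasurable ∞
  have hΔ_bdd : MemLp (fun s : 𝒲 × ℝ × ℝ × ℝ => s.2.2.1) ∞ P :=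
    memLp_of_bounded (a := 0) (b := 1) (hΔ01.mono fun s hs => by rcases hs with h | h <;> simp [h])
      measurable_snd.snd.fst.aestronglyMeasurable ∞
  have hY_bdd : MemLp (fun s : 𝒲 × ℝ × ℝ × ℝ => s.2.2.2) ∞ P :=
    memLp_of_bounded hY01 measurable_snd.snd.snd.aestronglyMeasurable ∞
  have hI_bdd := bdd hm₁ hI (a := 0) (b := 1) fun s => by split_ifs <;> simp
  have hG₀_bdd := bdd hm₁ hG₀meas hG₀b
  have hg₀_bdd := bdd hm₀ hg₀meas hg₀b
  have hgbar_bdd := bdd hm₀ hgbarMeas hgbarB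
  have hGbar_bdd := bdd hm₁ hGbarMeas hGbarB
  have hQbar_bdd := bdd hm₁ hQbarMeas hQbarB
  have hQbarv_bdd := bdd hm₀ hQbarvMeas hQbarvB
  have hQ₀_bdd := bdd hm₁ hQ₀meas fun s => abs_le.mp (hQ₀b s)
  have hQ₀ᵥ_bdd := bdd hm₀ hQ₀ᵥmeas fun s => abs_le.mp (hQ₀ᵥb s)
  have hDbar' : Dbar = influenceFunction (fun s => if v ≤ s.2.1 then (1 : ℝ) else 0)
      (fun s => s.2.2.1) (fun s => s.2.2.2) gbar Gbar Qbar Qbarv ψstar := by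
    rw [hDbar]
    funext s
    simp only [influenceFunction, div_mul_div_comm]
  have hmean : (1 / n : ℝ) * ∑ i, Dbar (o i) = 0 :=
    hDbar' ▸ hψstar ▸ mean_influenceFunction_eq_zero o hscore1 hscore2
  have hpop : ∫ s, Dbar s ∂P = R₂ + Ψ₀ - ψstar := by
    rw [hDbar', integral_influenceFunction_eq hm₀₁ hm₁ hδ0 hI hGbarMeas hQbarMeas hgbarMeas
      hQbarvMeas hI_bdd hΔ_bdd hY_bdd hG₀_bdd hg₀_bdd hQ₀_bdd hQ₀ᵥ_bdd hGbar_bdd hgbar_bdd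
      hQbar_bdd hQbarv_bdd (fun s => (hG₀b s).1) (fun s => (hg₀b s).1) (fun s => (hGbarB s).1)
      (fun s => (hgbarB s).1) hG₀ hQ₀ hg₀ hQ₀ᵥ, hR₂, hΨ₀]
  have iD₀ : Integrable D₀ P := hD₀ ▸ integrable_influenceFunction hδ0 hI_bdd hΔ_bdd hY_bdd
    hg₀_bdd.1 hG₀_bdd.1 hQ₀_bdd hQ₀ᵥ_bdd (fun s => (hg₀b s).1) (fun s => (hG₀b s).1) Ψ₀
  have iDbar : Integrable Dbar P := hDbar' ▸ integrable_influenceFunction hδ0 hI_bdd hΔ_bdd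
    hY_bdd hgbar_bdd.1 hGbar_bdd.1 hQbar_bdd hQbarv_bdd (fun s => (hgbarB s).1)
    (fun s => (hGbarB s).1) ψstar
  rw [Finset.sum_sub_distrib, integral_sub iDbar iD₀, hD₀mean, mul_sub, hmean, hpop]
  ring

/-- exact linearization of the srTMLE: empirical mean of the EIF, plus an
empirical-process term, plus the double-robust second-order remainder `R₂`, given that
the two srTMLE score equations hold at the sample points. -/
theorem stmt13 {𝒲 : Type*} [MeasurableSpace 𝒲]
    (P : Measure (𝒲 × ℝ × ℝ × ℝ)) [IsProbabilityMeasure P]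
    (v δ : ℝ) (hδ0 : 0 < δ) (hδ1 : δ < 1)
    (hΔ01 : ∀ᵐ s ∂P, s.2.2.1 = 0 ∨ s.2.2.1 = 1)
    (hY01 : ∀ᵐ s ∂P, s.2.2.2 ∈ Set.Icc (0 : ℝ) 1)
    (m0 m1 : MeasurableSpace (𝒲 × ℝ × ℝ × ℝ))
    (hm0 : m0 = MeasurableSpace.comap (fun s : 𝒲 × ℝ × ℝ × ℝ => s.1) inferInstance)
    (hm1 : m1 = MeasurableSpace.comap (fun s : 𝒲 × ℝ × ℝ × ℝ => (s.2.1, s.1)) inferInstance)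
    (G₀ g₀ Q₀ Q₀ᵥ : 𝒲 × ℝ × ℝ × ℝ → ℝ)
    (hG₀meas : Measurable[m1] G₀) (hg₀meas : Measurable[m0] g₀)
    (hQ₀meas : Measurable[m1] Q₀) (hQ₀ᵥmeas : Measurable[m0] Q₀ᵥ)
    (hG₀b : ∀ s, G₀ s ∈ Set.Icc δ 1) (hg₀b : ∀ s, g₀ s ∈ Set.Icc δ 1)
    (hQ₀b : ∀ s, |Q₀ s| ≤ 1 / δ) (hQ₀ᵥb : ∀ s, |Q₀ᵥ s| ≤ 1 / δ)
    (hG₀ : G₀ =ᵐ[P] P[fun s => s.2.2.1 | m1])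
    (hg₀ : g₀ =ᵐ[P] P[fun s => if v ≤ s.2.1 then (1 : ℝ) else 0 | m0])
    (hQ₀ : Q₀ =ᵐ[P] fun s => ((P[fun s' => s'.2.2.2 * s'.2.2.1 | m1]) s) / G₀ s)
    (hQ₀ᵥ : Q₀ᵥ =ᵐ[P] fun s =>
      ((P[fun s' => Q₀ s' * (if v ≤ s'.2.1 then (1 : ℝ) else 0) | m0]) s) / g₀ s)
    (Ψ₀ : ℝ) (hΨ₀ : Ψ₀ = ∫ s, Q₀ᵥ s ∂P)
    (Gbar gbar Qbar Qbarv : 𝒲 × ℝ × ℝ × ℝ → ℝ)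
    (hGbarMeas : Measurable[m1] Gbar) (hgbarMeas : Measurable[m0] gbar)
    (hQbarMeas : Measurable[m1] Qbar) (hQbarvMeas : Measurable[m0] Qbarv)
    (hGbarB : ∀ s, Gbar s ∈ Set.Icc δ 1) (hgbarB : ∀ s, gbar s ∈ Set.Icc δ 1)
    (hQbarB : ∀ s, Qbar s ∈ Set.Icc (0 : ℝ) 1) (hQbarvB : ∀ s, Qbarv s ∈ Set.Icc (0 : ℝ) 1)
    (n : ℕ) (hn : 0 < n) (o : Fin n → 𝒲 × ℝ × ℝ × ℝ)
    (hscore1 : (1 / n : ℝ) * ∑ i, ((if v ≤ (o i).2.1 then (1 : ℝ) else 0) * (o i).2.2.1 /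
        (gbar (o i) * Gbar (o i))) * ((o i).2.2.2 - Qbar (o i)) = 0)
    (hscore2 : (1 / n : ℝ) * ∑ i, ((if v ≤ (o i).2.1 then (1 : ℝ) else 0) / gbar (o i)) *
        (Qbar (o i) - Qbarv (o i)) = 0)
    (ψstar : ℝ) (hψstar : ψstar = (1 / n : ℝ) * ∑ i, Qbarv (o i))
    (D₀ Dbar : 𝒲 × ℝ × ℝ × ℝ → ℝ)
    (hD₀ : D₀ = fun s =>
      ((if v ≤ s.2.1 then (1 : ℝ) else 0) / g₀ s) * (s.2.2.1 / G₀ s) * (s.2.2.2 - Q₀ s)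
      + ((if v ≤ s.2.1 then (1 : ℝ) else 0) / g₀ s) * (Q₀ s - Q₀ᵥ s) + (Q₀ᵥ s - Ψ₀))
    (hD₀mean : ∫ s, D₀ s ∂P = 0)
    (hDbar : Dbar = fun s =>
      ((if v ≤ s.2.1 then (1 : ℝ) else 0) * s.2.2.1 / (gbar s * Gbar s)) * (s.2.2.2 - Qbar s)
      + ((if v ≤ s.2.1 then (1 : ℝ) else 0) / gbar s) * (Qbar s - Qbarv s) + (Qbarv s - ψstar))
    (R₂ : ℝ)
    (hR₂ : R₂ = ∫ s, ((if v ≤ s.2.1 then (1 : ℝ) else 0) / gbar s) *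
        ((G₀ s - Gbar s) / Gbar s) * (Q₀ s - Qbar s) ∂P
      + ∫ s, ((g₀ s - gbar s) / gbar s) * (Q₀ᵥ s - Qbarv s) ∂P) :
    ψstar - Ψ₀ = (1 / n : ℝ) * ∑ i, D₀ (o i)
      + ((1 / n : ℝ) * ∑ i, (Dbar (o i) - D₀ (o i)) - ∫ s, (Dbar s - D₀ s) ∂P)
      + R₂ :=
  stmt13_general P v δ hδ0 hΔ01 hY01 m0 m1 hm0 hm1 G₀ g₀ Q₀ Q₀ᵥ hG₀meas hg₀meas hQ₀meas hQ₀ᵥmeas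
    hG₀b hg₀b hQ₀b hQ₀ᵥb hG₀ hg₀ hQ₀ hQ₀ᵥ Ψ₀ hΨ₀ Gbar gbar Qbar Qbarv hGbarMeas hgbarMeas hQbarMeas
    hQbarvMeas hGbarB hgbarB hQbarB hQbarvB n o hscore1 hscore2 ψstar hψstar D₀ Dbar hD₀ hD₀mean
    hDbar R₂ hR₂
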